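/- Let c be an admissible edge weighting of Q_n and let Q_n(c) denote the support graph of c, whose edge set is the set of edges of nonzero weight and whose vertex set is the set of vertices incident to such an edge. Then every connected component of Q_n(c) is a sub-hypercube of Q_n: its vertex set is a subcube S of Q_n and its edge set is the set of all edges of Q_n with both endpoints in S. -/

import Mathlib

open scoped Classical

noncomputable section

/-- Adjacency in the hypercube `Q_n`: differ in exactly one coordinate. -/
def hcAdj {n : ℕ} (x y : Fin n → Bool) : Prop :=
  (Finset.univ.filter (fun k => x k ≠ y k)).card = 1

/-- Flip the `k`-th coordinate. -/
def hcFlip {n : ℕ} (x : Fin n → Bool) (k : Fin n) : Fin n → Bool :=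
  Function.update x k (!x k)

/-- A vertex of `Q_n` is even if it has an even number of coordinates equal to `true`. -/
def hcEven {n : ℕ} (x : Fin n → Bool) : Prop :=
  (Finset.univ.filter (fun k => x k = true)).card % 2 = 0

/-- `i` belongs to `U_n(c)`: `i` is even and incident to an edge of nonzero weight. -/
def inU {n : ℕ} (c : (Fin n → Bool) → (Fin n → Bool) → ℂ) (i : Fin n → Bool) : Prop :=
  hcEven i ∧ ∃ j, hcAdj i j ∧ c i j ≠ 0

/-- `j` belongs to `V_n(c)`: `j` is odd and incident to an edge of nonzero weight. -/
def inV {n : ℕ} (c : (Fin n → Bool) → (Fin n → Bool) → ℂ) (j : Fin n → Bool) : Prop :=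
  ¬ hcEven j ∧ ∃ i, hcAdj i j ∧ c i j ≠ 0

/-- An edge weighting `c` of `Q_n` (with `c i j` the weight of the edge `{i,j}`,
`i` even, `j` odd) is admissible. -/
def Admissible {n : ℕ} (c : (Fin n → Bool) → (Fin n → Bool) → ℂ) : Prop :=
  (∀ j₁, inV c j₁ → ∀ j₂, inV c j₂ →
    ∑ i ∈ Finset.univ.filter (fun i => hcEven i ∧ hcAdj i j₁ ∧ hcAdj i j₂),
      c i j₁ * (starRingEnd ℂ) (c i j₂) = if j₁ = j₂ then 1 else 0) ∧
  (∀ i₁, inU c i₁ → ∀ i₂, inU c i₂ →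
    ∑ j ∈ Finset.univ.filter (fun j => ¬ hcEven j ∧ hcAdj i₁ j ∧ hcAdj i₂ j),
      c i₁ j * (starRingEnd ℂ) (c i₂ j) = if i₁ = i₂ then 1 else 0)

/-- The support graph `Q_n(c)` of an edge weighting `c`: its edges are the edges of
`Q_n` of nonzero weight. -/
def suppGraph {n : ℕ} (c : (Fin n → Bool) → (Fin n → Bool) → ℂ) :
    SimpleGraph (Fin n → Bool) where
  Adj a b := (hcEven a ∧ hcAdj a b ∧ c a b ≠ 0) ∨ (hcEven b ∧ hcAdj b a ∧ c b a ≠ 0)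
  symm := by constructor; intro a b h; tauto
  loopless := by
    constructor
    intro a h
    have : ¬ hcAdj a a := by simp [hcAdj]
    tauto

variable {n : ℕ}

lemma hcFlip_apply_self (x : Fin n → Bool) (k : Fin n) : hcFlip x k k = !x k := by
  simp [hcFlip]

lemma hcFlip_apply_ne (x : Fin n → Bool) {k m : Fin n} (h : m ≠ k) : hcFlip x k m = x m := by
  simp [hcFlip, Function.update_of_ne h]

lemma hcFlip_hcFlip (x : Fin n → Bool) (k : Fin n) : hcFlip (hcFlip x k) k = x := by
  funext m
  by_cases h : m = k
  · subst h; simp [hcFlip_apply_self]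
  · simp [hcFlip_apply_ne _ h]

lemma hcFlip_comm (x : Fin n → Bool) (k l : Fin n) (h : k ≠ l) :
    hcFlip (hcFlip x k) l = hcFlip (hcFlip x l) k := by
  funext m
  by_cases hk : m = k
  · subst hk; rw [hcFlip_apply_ne _ h, hcFlip_apply_self, hcFlip_apply_self,
      hcFlip_apply_ne _ h]
  · by_cases hl : m = l
    · subst hl
      rw [hcFlip_apply_self, hcFlip_apply_ne _ (Ne.symm h), hcFlip_apply_ne _ hk,
        hcFlip_apply_self]
    · rw [hcFlip_apply_ne _ hl, hcFlip_apply_ne _ hk, hcFlip_apply_ne _ hk,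
        hcFlip_apply_ne _ hl]

lemma hcAdj_iff {x y : Fin n → Bool} : hcAdj x y ↔ ∃ k, y = hcFlip x k := by
  constructor
  · intro h
    rw [hcAdj, Finset.card_eq_one] at h
    obtain ⟨k, hk⟩ := h
    refine ⟨k, funext fun m => ?_⟩
    by_cases hm : m = k
    · subst hm
      have : m ∈ Finset.univ.filter (fun k => x k ≠ y k) := by rw [hk]; simp
      simp only [Finset.mem_filter] at this
      rw [hcFlip_apply_self]
      cases hx : x m <;> cases hy : y m <;> simp_all
    · have : m ∉ Finset.univ.filter (fun k => x k ≠ y k) := by rw [hk]; simp [hm]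
      simp only [Finset.mem_filter, Finset.mem_univ, true_and, not_not] at this
      rw [hcFlip_apply_ne _ hm, this]
  · rintro ⟨k, rfl⟩
    rw [hcAdj]
    convert Finset.card_singleton k
    ext m
    simp only [Finset.mem_filter, Finset.mem_univ, true_and, Finset.mem_singleton]
    by_cases hm : m = k
    · subst hm; simp [hcFlip_apply_self]
    · simp [hcFlip_apply_ne _ hm, hm]

lemma hcAdj_flip (x : Fin n → Bool) (k : Fin n) : hcAdj x (hcFlip x k) :=
  hcAdj_iff.2 ⟨k, rfl⟩

lemma hcAdj_symm {x y : Fin n → Bool} (h : hcAdj x y) : hcAdj y x := by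
  rw [hcAdj] at h ⊢
  convert h using 2
  ext m; simp [ne_comm]

lemma hcEven_flip (x : Fin n → Bool) (k : Fin n) : hcEven (hcFlip x k) ↔ ¬ hcEven x := by
  have key : (Finset.univ.filter (fun m => hcFlip x k m = true)).card
      = if x k then (Finset.univ.filter (fun m => x m = true)).card - 1
        else (Finset.univ.filter (fun m => x m = true)).card + 1 := by
    by_cases hx : x k
    · have hset : Finset.univ.filter (fun m => hcFlip x k m = true)
          = (Finset.univ.filter (fun m => x m = true)).erase k := by
        ext m
        simp only [Finset.mem_filter, Finset.mem_univ, true_and, Finset.mem_erase]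
        by_cases hm : m = k
        · subst hm; simp [hcFlip_apply_self, hx]
        · simp [hcFlip_apply_ne _ hm, hm]
      rw [if_pos hx, hset, Finset.card_erase_of_mem (by simp [hx])]
    · have hset : Finset.univ.filter (fun m => hcFlip x k m = true)
          = insert k (Finset.univ.filter (fun m => x m = true)) := by
        ext m
        simp only [Finset.mem_filter, Finset.mem_univ, true_and, Finset.mem_insert]
        by_cases hm : m = k
        · subst hm; simp [hcFlip_apply_self, hx]
        · simp [hcFlip_apply_ne _ hm, hm]
      rw [if_neg hx, hset, Finset.card_insert_of_notMem (by simp [hx])]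
  have hmem : x k = true → 1 ≤ (Finset.univ.filter (fun m => x m = true)).card := by
    intro hx
    exact Finset.card_pos.2 ⟨k, by simp [hx]⟩
  rw [hcEven, hcEven, key]
  by_cases hx : x k
  · have := hmem hx
    rw [if_pos hx]; omega
  · rw [if_neg hx]; omega

lemma hcAdj_common {x : Fin n → Bool} {k l : Fin n} (hkl : k ≠ l) {w : Fin n → Bool}
    (h1 : hcAdj w (hcFlip x k)) (h2 : hcAdj w (hcFlip x l)) :
    w = x ∨ w = hcFlip (hcFlip x k) l := by
  obtain ⟨a, ha⟩ := hcAdj_iff.1 h1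
  have hw : w = hcFlip (hcFlip x k) a := by rw [ha, hcFlip_hcFlip]
  by_cases hak : a = k
  · subst hak; left; rw [hw, hcFlip_hcFlip]
  · by_cases hal : a = l
    · subst hal; right; exact hw
    · exfalso
      have hk : k ∈ Finset.univ.filter (fun m => w m ≠ hcFlip x l m) := by
        simp only [Finset.mem_filter, Finset.mem_univ, true_and]
        rw [hw, hcFlip_apply_ne _ (Ne.symm hak), hcFlip_apply_self,
          hcFlip_apply_ne _ hkl]
        cases x k <;> simp
      have hA : a ∈ Finset.univ.filter (fun m => w m ≠ hcFlip x l m) := by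
        simp only [Finset.mem_filter, Finset.mem_univ, true_and]
        rw [hw, hcFlip_apply_self, hcFlip_apply_ne _ hak, hcFlip_apply_ne _ hal]
        cases x a <;> simp
      have hsub : ({k, a} : Finset (Fin n)) ⊆
          Finset.univ.filter (fun m => w m ≠ hcFlip x l m) := by
        intro m hm
        rcases Finset.mem_insert.1 hm with rfl | hm
        · exact hk
        · rw [Finset.mem_singleton.1 hm]; exact hA
      have := Finset.card_le_card hsub
      rw [hcAdj] at h2
      rw [Finset.card_pair (Ne.symm hak), h2] at this
      omega

variable {c : (Fin n → Bool) → (Fin n → Bool) → ℂ}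

lemma flip_ne (x : Fin n → Bool) (k : Fin n) : hcFlip x k ≠ x := by
  intro h
  have := congrFun h k
  rw [hcFlip_apply_self] at this
  cases x k <;> simp_all

lemma flip_flip_ne (x : Fin n → Bool) {k l : Fin n} (hkl : k ≠ l) :
    hcFlip (hcFlip x k) l ≠ x := by
  intro h
  have := congrFun h k
  rw [hcFlip_apply_ne _ hkl, hcFlip_apply_self] at this
  cases x k <;> simp_all

lemma suppGraph_adj {c : (Fin n → Bool) → (Fin n → Bool) → ℂ} {a b : Fin n → Bool} :
    (suppGraph c).Adj a b ↔
      (hcEven a ∧ hcAdj a b ∧ c a b ≠ 0) ∨ (hcEven b ∧ hcAdj b a ∧ c b a ≠ 0) :=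
  Iff.rfl

/-- 4-cycle completion along two distinct directions. -/
lemma square_lemma (hadm : Admissible c) {x : Fin n → Bool} {k l : Fin n} (hkl : k ≠ l)
    (h1 : (suppGraph c).Adj x (hcFlip x k)) (h2 : (suppGraph c).Adj x (hcFlip x l)) :
    (suppGraph c).Adj (hcFlip x k) (hcFlip (hcFlip x k) l) := by
  set y := hcFlip x k with hy
  set z := hcFlip x l with hz
  set w := hcFlip (hcFlip x k) l with hwdef
  have hyodd : hcEven y ↔ ¬ hcEven x := hcEven_flip x k
  have hzodd : hcEven z ↔ ¬ hcEven x := hcEven_flip x l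
  have hweven : hcEven w ↔ hcEven x := by
    rw [hwdef, hcEven_flip, hcEven_flip]; tauto
  have hyz : y ≠ z := by
    intro h
    have := congrFun h k
    rw [hy, hz, hcFlip_apply_self, hcFlip_apply_ne _ hkl] at this
    cases x k <;> simp_all
  have hwadj_y : hcAdj w y := by
    rw [hwdef]; exact hcAdj_symm (hcAdj_flip y l)
  have hwadj_z : hcAdj w z := by
    rw [hwdef, hcFlip_comm x k l hkl, hz]
    exact hcAdj_symm (hcAdj_flip z k)
  have hxw : x ≠ w := fun h => flip_flip_ne x hkl h.symm
  have hconj : ∀ a : ℂ, a ≠ 0 → (starRingEnd ℂ) a ≠ 0 := by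
    intro a ha
    rw [starRingEnd_apply]
    exact star_ne_zero.2 ha
  by_cases hxe : hcEven x
  · -- x even: column orthogonality on odd vertices y, z
    have hyo : ¬ hcEven y := fun h => (hyodd.1 h) hxe
    have hzo : ¬ hcEven z := fun h => (hzodd.1 h) hxe
    have hcy : c x y ≠ 0 := by
      rcases h1 with ⟨_, _, h⟩ | ⟨he, _, _⟩
      · exact h
      · exact absurd he hyo
    have hcz : c x z ≠ 0 := by
      rcases h2 with ⟨_, _, h⟩ | ⟨he, _, _⟩
      · exact h
      · exact absurd he hzo
    have hVy : inV c y := ⟨hyo, x, hcAdj_flip x k, hcy⟩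
    have hVz : inV c z := ⟨hzo, x, hcAdj_flip x l, hcz⟩
    have hsum := hadm.1 y hVy z hVz
    rw [if_neg hyz] at hsum
    have hfilter : Finset.univ.filter (fun i => hcEven i ∧ hcAdj i y ∧ hcAdj i z)
        = {x, w} := by
      ext i
      simp only [Finset.mem_filter, Finset.mem_univ, true_and, Finset.mem_insert,
        Finset.mem_singleton]
      constructor
      · rintro ⟨_, hiy, hiz⟩
        exact hcAdj_common hkl hiy hiz
      · rintro (h | h) <;> rw [h]
        · exact ⟨hxe, hcAdj_flip x k, hcAdj_flip x l⟩
        · exact ⟨hweven.2 hxe, hwadj_y, hwadj_z⟩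
    rw [hfilter, Finset.sum_pair hxw] at hsum
    have hne1 : c x y * (starRingEnd ℂ) (c x z) ≠ 0 := mul_ne_zero hcy (hconj _ hcz)
    have hne2 : c w y * (starRingEnd ℂ) (c w z) ≠ 0 := by
      intro h
      rw [h, add_zero] at hsum
      exact hne1 hsum
    exact Or.inr ⟨hweven.2 hxe, hwadj_y, (mul_ne_zero_iff.1 hne2).1⟩
  · -- x odd: row orthogonality on even vertices y, z
    have hye : hcEven y := hyodd.2 hxe
    have hze : hcEven z := hzodd.2 hxe
    have hcy : c y x ≠ 0 := by
      rcases h1 with ⟨he, _, _⟩ | ⟨_, _, h⟩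
      · exact absurd he hxe
      · exact h
    have hcz : c z x ≠ 0 := by
      rcases h2 with ⟨he, _, _⟩ | ⟨_, _, h⟩
      · exact absurd he hxe
      · exact h
    have hUy : inU c y := ⟨hye, x, hcAdj_symm (hcAdj_flip x k), hcy⟩
    have hUz : inU c z := ⟨hze, x, hcAdj_symm (hcAdj_flip x l), hcz⟩
    have hsum := hadm.2 y hUy z hUz
    rw [if_neg hyz] at hsum
    have hfilter : Finset.univ.filter (fun j => ¬ hcEven j ∧ hcAdj y j ∧ hcAdj z j)
        = {x, w} := by
      ext j
      simp only [Finset.mem_filter, Finset.mem_univ, true_and, Finset.mem_insert,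
        Finset.mem_singleton]
      constructor
      · rintro ⟨_, hjy, hjz⟩
        exact hcAdj_common hkl (hcAdj_symm hjy) (hcAdj_symm hjz)
      · rintro (h | h) <;> rw [h]
        · exact ⟨hxe, hcAdj_symm (hcAdj_flip x k), hcAdj_symm (hcAdj_flip x l)⟩
        · exact ⟨fun hh => hxe (hweven.1 hh), hcAdj_symm hwadj_y, hcAdj_symm hwadj_z⟩
    rw [hfilter, Finset.sum_pair hxw] at hsum
    have hne1 : c y x * (starRingEnd ℂ) (c z x) ≠ 0 := mul_ne_zero hcy (hconj _ hcz)
    have hne2 : c y w * (starRingEnd ℂ) (c z w) ≠ 0 := by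
      intro h
      rw [h, add_zero] at hsum
      exact hne1 hsum
    exact Or.inl ⟨hye, hcAdj_flip y l, (mul_ne_zero_iff.1 hne2).1⟩

lemma supp_hcAdj {x y : Fin n → Bool} (h : (suppGraph c).Adj x y) : hcAdj x y := by
  rcases h with ⟨_, h', _⟩ | ⟨_, h', _⟩
  · exact h'
  · exact hcAdj_symm h'

lemma D_mono (hadm : Admissible c) {x : Fin n → Bool} {k l : Fin n}
    (hk : (suppGraph c).Adj x (hcFlip x k)) (hl : (suppGraph c).Adj x (hcFlip x l)) :
    (suppGraph c).Adj (hcFlip x k) (hcFlip (hcFlip x k) l) := by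
  by_cases hkl : k = l
  · subst hkl
    rw [hcFlip_hcFlip]
    exact hk.symm
  · exact square_lemma hadm hkl hk hl

lemma D_eq (hadm : Admissible c) {x : Fin n → Bool} {k : Fin n}
    (hk : (suppGraph c).Adj x (hcFlip x k)) (l : Fin n) :
    (suppGraph c).Adj x (hcFlip x l) ↔
      (suppGraph c).Adj (hcFlip x k) (hcFlip (hcFlip x k) l) := by
  constructor
  · exact D_mono hadm hk
  · intro h
    have hk' : (suppGraph c).Adj (hcFlip x k) (hcFlip (hcFlip x k) k) := by
      rw [hcFlip_hcFlip]; exact hk.symm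
    have := D_mono hadm hk' h
    rwa [hcFlip_hcFlip] at this

lemma walk_D (hadm : Admissible c) {x y : Fin n → Bool} (p : (suppGraph c).Walk x y)
    (l : Fin n) :
    (suppGraph c).Adj x (hcFlip x l) ↔ (suppGraph c).Adj y (hcFlip y l) := by
  induction p with
  | nil => exact Iff.rfl
  | @cons a b d h q ih =>
    obtain ⟨k, rfl⟩ := hcAdj_iff.1 (supp_hcAdj h)
    exact (D_eq hadm h l).trans ih

lemma walk_agree (hadm : Admissible c) {x y : Fin n → Bool} (p : (suppGraph c).Walk x y) :
    ∀ l, ¬ (suppGraph c).Adj x (hcFlip x l) → y l = x l := by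
  induction p with
  | nil => intro l _; rfl
  | @cons a b d h q ih =>
    intro l hl
    obtain ⟨k, rfl⟩ := hcAdj_iff.1 (supp_hcAdj h)
    have hkl : k ≠ l := fun e => hl (e ▸ h)
    have hb : ¬ (suppGraph c).Adj (hcFlip a k) (hcFlip (hcFlip a k) l) :=
      fun hadjb => hl ((D_eq hadm h l).2 hadjb)
    rw [ih l hb, hcFlip_apply_ne _ (Ne.symm hkl)]

lemma reach_of_agree (hadm : Admissible c) (v : Fin n → Bool) (w : Fin n → Bool) :
    ∀ (m : ℕ) (x : Fin n → Bool), (suppGraph c).Reachable v x →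
      (∀ l, x l ≠ w l → (suppGraph c).Adj x (hcFlip x l)) →
      (Finset.univ.filter fun l => x l ≠ w l).card = m →
      (suppGraph c).Reachable v w := by
  intro m
  induction m with
  | zero =>
    intro x hvx _ hcard
    have : w = x := by
      funext l
      by_contra hne
      have hl : l ∈ Finset.univ.filter fun l => x l ≠ w l := by
        simp [Ne.symm hne]
      rw [Finset.card_eq_zero] at hcard
      rw [hcard] at hl
      exact absurd hl (Finset.notMem_empty l)
    exact this ▸ hvx
  | succ m ih =>
    intro x hvx hK hcard
    have hne : (Finset.univ.filter fun l => x l ≠ w l).Nonempty :=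
      Finset.card_pos.1 (by omega)
    obtain ⟨l, hl⟩ := hne
    have hxl : x l ≠ w l := by simpa using hl
    have hadj : (suppGraph c).Adj x (hcFlip x l) := hK l hxl
    have hvx' : (suppGraph c).Reachable v (hcFlip x l) := hvx.trans hadj.reachable
    have hwl : hcFlip x l l = w l := by
      rw [hcFlip_apply_self]
      cases hx : x l <;> cases hw : w l <;> simp_all
    apply ih (hcFlip x l) hvx'
    · intro l' h'
      have hl' : l' ≠ l := by
        intro e
        rw [e, hwl] at h'
        exact h' rfl
      have hxl' : x l' ≠ w l' := by
        rwa [hcFlip_apply_ne _ hl'] at h'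
      exact (D_eq hadm hadj l').1 (hK l' hxl')
    · have hset : (Finset.univ.filter fun l' => hcFlip x l l' ≠ w l')
          = (Finset.univ.filter fun l' => x l' ≠ w l').erase l := by
        ext l'
        simp only [Finset.mem_filter, Finset.mem_univ, true_and, Finset.mem_erase]
        by_cases e : l' = l
        · subst e; simp [hwl]
        · rw [hcFlip_apply_ne _ e]; simp [e]
      rw [hset, Finset.card_erase_of_mem hl, hcard]
      omega

/-- Every connected component of the support graph `Q_n(c)` of an
admissible edge weighting is a sub-hypercube of `Q_n`: the component of a supported
vertex `v` is a subcube `S` (vertices agreeing with `v` outside a set `K` of free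
coordinates) and it contains every edge of `Q_n` joining two vertices of `S`. -/
theorem admissible_support_components_are_subcubes {n : ℕ} (hn : 1 ≤ n)
    (c : (Fin n → Bool) → (Fin n → Bool) → ℂ) (hadm : Admissible c)
    (v : Fin n → Bool) (hv : ∃ w, (suppGraph c).Adj v w) :
    ∃ K : Set (Fin n),
      (∀ w, (suppGraph c).Reachable v w ↔ ∀ ℓ ∉ K, w ℓ = v ℓ) ∧
      (∀ a b, (∀ ℓ ∉ K, a ℓ = v ℓ) → (∀ ℓ ∉ K, b ℓ = v ℓ) →
        hcAdj a b → (suppGraph c).Adj a b) := by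
  classical
  have backward : ∀ w, (∀ ℓ, ℓ ∉ {k | (suppGraph c).Adj v (hcFlip v k)} → w ℓ = v ℓ) →
      (suppGraph c).Reachable v w := by
    intro w h
    apply reach_of_agree hadm v w _ v (SimpleGraph.Reachable.refl v) ?_ rfl
    intro l hne
    by_contra hnot
    exact hne ((h l hnot).symm)
  refine ⟨{k | (suppGraph c).Adj v (hcFlip v k)}, fun w => ⟨?_, backward w⟩, ?_⟩
  · intro hr ℓ hℓ
    exact hr.elim fun p => walk_agree hadm p ℓ hℓ
  · intro a b ha hb hadj
    obtain ⟨k, rfl⟩ := hcAdj_iff.1 hadj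
    have hk : (suppGraph c).Adj v (hcFlip v k) := by
      by_contra hnot
      have h1 := ha k hnot
      have h2 := hb k hnot
      rw [hcFlip_apply_self, h1] at h2
      cases v k <;> simp_all
    obtain ⟨p⟩ := backward a ha
    exact (walk_D hadm p k).1 hk
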